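/- arXiv:2107.14537 — 4 statements merged into one kernel-verified Lean document; each statement's English description precedes it below -/
import Mathlib

section
/- Let k be an algebraically closed field of characteristic 2 and let F = y⁶ + x⁵y + x²z⁴ ∈ k[x,y,z]. The identity F(s⁶, s²t⁴, t⁶ + s⁵t) = 0 holds in k[s,t], the triple (s⁶, s²t⁴, t⁶+s⁵t) is nonzero whenever (s,t) ≠ (0,0), and the induced map ℙ¹(k) → ℙ²(k), (s:t) ↦ (s⁶ : s²t⁴ : t⁶+s⁵t), is a bijection from ℙ¹(k) onto the zero locus {(x:y:z) ∈ ℙ²(k) : F(x,y,z) = 0}. In particular the sextic F = 0 is a rational curve. -/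
/-!
In characteristic 2 the fourth power is additive and injective. On the chart `x = 1` the curve
reads `z⁴ = y⁶ + y`, so writing `y = t⁴` gives `z⁴ = (t⁶ + t)⁴`, i.e. `z = t⁶ + t`; the only
point with `x = 0` is `(0 : 0 : 1)`, the image of `(0 : 1)`. Conversely, when `s ≠ 0` the first
two coordinates already determine `(s : t)`: proportionality gives `s⁴t'⁴ = s'⁴t⁴`, hence
`st' = s't`.
-/

open MvPolynomial

def sextic {R : Type*} [CommRing R] (x y z : R) : R := y ^ 6 + x ^ 5 * y + x ^ 2 * z ^ 4

theorem aeval_eq_sextic {R A : Type*} [CommSemiring R] [CommRing A] [Algebra R A]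
    (v : Fin 3 → A) :
    aeval v (X 1 ^ 6 + X 0 ^ 5 * X 1 + X 0 ^ 2 * X 2 ^ 4 : MvPolynomial (Fin 3) R) =
      sextic (v 0) (v 1) (v 2) := by
  simp [sextic]

section CharTwo

variable {R : Type*} [CommRing R] [CharP R 2]

theorem CharTwo.add_pow_four (a b : R) : (a + b) ^ 4 = a ^ 4 + b ^ 4 :=
  add_pow_char_pow (p := 2) (n := 2) a b

theorem CharTwo.pow_four_injective [IsReduced R] : Function.Injective (fun a : R ↦ a ^ 4) :=
  iterateFrobenius_inj R 2 2

theorem sextic_param (s t : R) : sextic (s ^ 6) (s ^ 2 * t ^ 4) (t ^ 6 + s ^ 5 * t) = 0 := by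
  rw [sextic, CharTwo.add_pow_four]
  linear_combination (s ^ 12 * t ^ 24 + s ^ 32 * t ^ 4) * (CharTwo.two_eq_zero : (2 : R) = 0)

end CharTwo

theorem param_ne_zero {R : Type*} [CommRing R] [NoZeroDivisors R] {s t : R}
    (hst : (s, t) ≠ (0, 0)) : (s ^ 6, s ^ 2 * t ^ 4, t ^ 6 + s ^ 5 * t) ≠ (0, 0, 0) := by
  intro h
  simp only [Prod.mk.injEq] at h
  obtain ⟨hs, -, ht⟩ := h
  have hs : s = 0 := pow_eq_zero_iff (by norm_num) |>.mp hs
  subst hs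
  have ht : t = 0 := pow_eq_zero_iff (n := 6) (by norm_num) |>.mp (by simpa using ht)
  exact hst (by rw [ht])

section Field

variable {k : Type*} [Field k] [CharP k 2]

theorem exists_param_of_sextic_eq_zero [IsAlgClosed k] {x y z : k} (hxyz : (x, y, z) ≠ (0, 0, 0))
    (h : sextic x y z = 0) :
    ∃ s t c : k, (s, t) ≠ (0, 0) ∧ c ≠ 0 ∧
      x = c * s ^ 6 ∧ y = c * (s ^ 2 * t ^ 4) ∧ z = c * (t ^ 6 + s ^ 5 * t) := by
  by_cases hx : x = 0
  · subst hx
    have hy : y = 0 := pow_eq_zero_iff (n := 6) (by norm_num) |>.mp (by simpa [sextic] using h)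
    subst hy
    have hz : z ≠ 0 := fun hz ↦ hxyz (by rw [hz])
    exact ⟨0, 1, z, by simp, hz, by ring, by ring, by ring⟩
  · obtain ⟨t, ht⟩ := IsAlgClosed.exists_pow_nat_eq (y / x) (by norm_num : 0 < 4)
    obtain rfl : y = x * t ^ 4 := by rw [ht, mul_div_cancel₀ _ hx]
    refine ⟨1, t, x, by simp, hx, by ring, by ring, ?_⟩
    rw [one_pow, one_mul]
    have hz : x ^ 2 * z ^ 4 = x ^ 2 * (x * (t ^ 6 + t)) ^ 4 := by
      rw [mul_pow, CharTwo.add_pow_four]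
      rw [sextic] at h
      linear_combination h - x ^ 6 * (t ^ 24 + t ^ 4) * (CharTwo.two_eq_zero : (2 : k) = 0)
    exact CharTwo.pow_four_injective (mul_left_cancel₀ (pow_ne_zero 2 hx) hz)

theorem mul_eq_mul_of_cross_eq {s t s' t' : k} (hs : s ≠ 0) (hs' : s' ≠ 0)
    (h : s ^ 6 * (s' ^ 2 * t' ^ 4) = s' ^ 6 * (s ^ 2 * t ^ 4)) : s * t' = s' * t := by
  apply CharTwo.pow_four_injective
  apply mul_left_cancel₀ (mul_ne_zero (pow_ne_zero 2 hs) (pow_ne_zero 2 hs'))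
  linear_combination h

theorem param_eq_smul_of_proportional {s t s' t' c : k} (hst : (s, t) ≠ (0, 0))
    (hst' : (s', t') ≠ (0, 0)) (hc : c ≠ 0) (h₁ : s' ^ 6 = c * s ^ 6)
    (h₂ : s' ^ 2 * t' ^ 4 = c * (s ^ 2 * t ^ 4)) :
    ∃ d : k, d ≠ 0 ∧ s' = d * s ∧ t' = d * t := by
  by_cases hs : s = 0
  · subst hs
    obtain rfl : s' = 0 := pow_eq_zero_iff (n := 6) (by norm_num) |>.mp (by simp [h₁])
    have ht : t ≠ 0 := fun h ↦ hst (by rw [h])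
    have ht' : t' ≠ 0 := fun h ↦ hst' (by rw [h])
    exact ⟨t' / t, div_ne_zero ht' ht, by ring, by field_simp⟩
  · have hs' : s' ≠ 0 := by
      rintro rfl
      simp [hc, hs] at h₁
    have key : s * t' = s' * t :=
      mul_eq_mul_of_cross_eq hs hs' (by linear_combination s ^ 6 * h₂ - s ^ 2 * t ^ 4 * h₁)
    refine ⟨s' / s, div_ne_zero hs' hs, by field_simp, ?_⟩
    field_simp
    linear_combination key

end Field

/-- `F(s⁶, s²t⁴, t⁶+s⁵t) = 0` identically, the parametrizing triple is nonzero for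
`(s,t) ≠ (0,0)`, and `(s:t) ↦ (s⁶ : s²t⁴ : t⁶+s⁵t)` is a bijection of `ℙ¹(k)` onto
the zero locus of `F = y⁶ + x⁵y + x²z⁴` in `ℙ²(k)`; so the sextic is rational. -/
theorem stmt_2 (k : Type*) [Field k] [IsAlgClosed k] [CharP k 2]
    (F : MvPolynomial (Fin 3) k)
    (hF : F = X 1 ^ 6 + X 0 ^ 5 * X 1 + X 0 ^ 2 * X 2 ^ 4) :
    (aeval (![X 0 ^ 6, X 0 ^ 2 * X 1 ^ 4, X 1 ^ 6 + X 0 ^ 5 * X 1] :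
        Fin 3 → MvPolynomial (Fin 2) k) F = 0) ∧
    (∀ s t : k, (s, t) ≠ (0, 0) →
      (s ^ 6, s ^ 2 * t ^ 4, t ^ 6 + s ^ 5 * t) ≠ ((0 : k), (0 : k), (0 : k))) ∧
    (∀ x y z : k, (x, y, z) ≠ (0, 0, 0) → eval ![x, y, z] F = 0 →
      ∃ s t c : k, (s, t) ≠ (0, 0) ∧ c ≠ 0 ∧
        x = c * s ^ 6 ∧ y = c * (s ^ 2 * t ^ 4) ∧ z = c * (t ^ 6 + s ^ 5 * t)) ∧
    (∀ s t s' t' : k, (s, t) ≠ (0, 0) → (s', t') ≠ (0, 0) →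
      (∃ c : k, c ≠ 0 ∧ s' ^ 6 = c * s ^ 6 ∧ s' ^ 2 * t' ^ 4 = c * (s ^ 2 * t ^ 4) ∧
        t' ^ 6 + s' ^ 5 * t' = c * (t ^ 6 + s ^ 5 * t)) →
      ∃ d : k, d ≠ 0 ∧ s' = d * s ∧ t' = d * t) := by
  subst hF
  refine ⟨?_, fun s t ↦ param_ne_zero, fun x y z hxyz h ↦ ?_, ?_⟩
  · rw [aeval_eq_sextic]
    exact sextic_param _ _
  · exact exists_param_of_sextic_eq_zero hxyz (by simpa [sextic] using h)
  · rintro s t s' t' hst hst' ⟨c, hc, h₁, h₂, -⟩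
    exact param_eq_smul_of_proportional hst hst' hc h₁ h₂
end

section
/- Let k be a field of characteristic 2, and let Q₁ = y² + z² + xy + yz + zx and Q₂ = x² + z² + xy + yz + zx in k[x,y,z]. A nonzero triple (x,y,z) ∈ k³ satisfies Q₁(x,y,z) = 0 and Q₂(x,y,z) = 0 if and only if x = y and z = 0. That is, the two conics Q₁ = 0 and Q₂ = 0 meet in ℙ²(k) only at the single point (1:1:0). -/
/-! In characteristic 2, `Q₂ = Q₁ + x² + y² = Q₁ + (x + y)²`, so on `Q₁ = Q₂ = 0` we get `(x + y)² = 0`, i.e. `x = y`;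
and on the line `x = y` the conic `Q₁` degenerates to `z²`. -/

namespace CharTwo

variable {R : Type*} [CommRing R] [CharP R 2]

def conicQ₁ (x y z : R) : R := y ^ 2 + z ^ 2 + x * y + y * z + z * x

def conicQ₂ (x y z : R) : R := x ^ 2 + z ^ 2 + x * y + y * z + z * x

theorem conicQ₂_eq_conicQ₁_add (x y z : R) : conicQ₂ x y z = conicQ₁ x y z + (x ^ 2 + y ^ 2) := by
  unfold conicQ₁ conicQ₂
  linear_combination (-y ^ 2) * two_eq_zero (R := R)

theorem conicQ₁_self (x z : R) : conicQ₁ x x z = z ^ 2 := by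
  unfold conicQ₁
  linear_combination (x ^ 2 + x * z) * two_eq_zero (R := R)

theorem conicQ₂_self (x z : R) : conicQ₂ x x z = z ^ 2 :=
  conicQ₁_self x z

theorem conicQ₁_eq_zero_and_conicQ₂_eq_zero_iff [NoZeroDivisors R] {x y z : R} :
    conicQ₁ x y z = 0 ∧ conicQ₂ x y z = 0 ↔ x = y ∧ z = 0 := by
  constructor
  · rintro ⟨h₁, h₂⟩
    have hxy : x = y := by
      rwa [conicQ₂_eq_conicQ₁_add, h₁, zero_add, CharTwo.add_eq_zero, sq_inj] at h₂
    subst hxy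
    rw [conicQ₁_self, pow_eq_zero_iff two_ne_zero] at h₁
    exact ⟨rfl, h₁⟩
  · rintro ⟨rfl, rfl⟩
    rw [conicQ₁_self, conicQ₂_self, zero_pow two_ne_zero]
    exact ⟨rfl, rfl⟩

end CharTwo

/-- In characteristic 2 the conics `Q₁ : y²+z²+xy+yz+zx = 0` and
`Q₂ : x²+z²+xy+yz+zx = 0` meet in `ℙ²` only at `(1:1:0)`: for a nonzero triple,
both vanish iff `x = y` and `z = 0`. -/
theorem stmt_7 (k : Type*) [Field k] [CharP k 2] :
    ∀ x y z : k, (x, y, z) ≠ (0, 0, 0) →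
      ((y ^ 2 + z ^ 2 + x * y + y * z + z * x = 0 ∧
        x ^ 2 + z ^ 2 + x * y + y * z + z * x = 0) ↔ (x = y ∧ z = 0)) :=
  fun _ _ _ _ => CharTwo.conicQ₁_eq_zero_and_conicQ₂_eq_zero_iff
end

section
/- Let k be a field of characteristic 2 and let a, b ∈ k satisfy b² = a. Let φ be the k-algebra substitution of k[x,y,z] determined by x ↦ x, y ↦ b·x + y, z ↦ a·x + z, and set G = y² + xz and H = x⁶ + G²·(x + a·z)·z. Then φ is an involution, φ(G) = G, φ(x²G²) = x²G², and φ(H) = H + a(1 + a²)·x²G². Consequently φ sends every member s·x²G² + t·H of the pencil of sextics spanned by x²G² and H to a member of the same pencil. -/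
/-!
The substitution is the shear `(x, y, z) ↦ (x, y + b x, z + a x)`. Shears compose by adding their
parameters, so in characteristic 2 each one is an involution. Squaring is additive in
characteristic 2, so the shear sends `y² + xz` to `y² + xz + (b² + a) x²`, which is `y² + xz`
when `b² = a`. Since `φ` also fixes `x`, the only change in `H` comes from its factor
`(x + a z) z`, which becomes `(x + a z + a² x)(z + a x) = (x + a z) z + a (1 + a²) x²` (the two
terms `a² x z` cancel); hence `φ` acts on the pencil by a transvection.
-/

open MvPolynomial

section Shear

variable {R : Type*} [CommRing R]

noncomputable def shear (b c : R) : MvPolynomial (Fin 3) R →ₐ[R] MvPolynomial (Fin 3) R :=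
  aeval ![X 0, C b * X 0 + X 1, C c * X 0 + X 2]

@[simp]
lemma shear_X_zero (b c : R) : shear b c (X 0) = X 0 := by simp [shear]

@[simp]
lemma shear_X_one (b c : R) : shear b c (X 1) = C b * X 0 + X 1 := by simp [shear]

@[simp]
lemma shear_X_two (b c : R) : shear b c (X 2) = C c * X 0 + X 2 := by simp [shear]

lemma shear_zero : shear (0 : R) 0 = AlgHom.id R _ := by
  ext i : 1
  fin_cases i <;> simp

lemma shear_comp_shear (b c b' c' : R) :
    (shear b c).comp (shear b' c') = shear (b + b') (c + c') := by
  ext i : 1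
  fin_cases i <;> simp <;> ring

lemma shear_shear [CharP R 2] (b c : R) (p : MvPolynomial (Fin 3) R) :
    shear b c (shear b c p) = p := by
  rw [← AlgHom.comp_apply, shear_comp_shear, CharTwo.add_self_eq_zero,
    CharTwo.add_self_eq_zero, shear_zero, AlgHom.id_apply]

lemma shear_conic [CharP R 2] (b c : R) :
    shear b c (X 1 ^ 2 + X 0 * X 2) = X 1 ^ 2 + X 0 * X 2 + C (b ^ 2 + c) * X 0 ^ 2 := by
  simp only [map_add, map_mul, map_pow, shear_X_zero, shear_X_one, shear_X_two,
    CharTwo.add_sq]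
  ring

lemma shear_conic_of_sq_eq [CharP R 2] {b c : R} (hbc : b ^ 2 = c) :
    shear b c (X 1 ^ 2 + X 0 * X 2) = X 1 ^ 2 + X 0 * X 2 := by
  rw [shear_conic, hbc, CharTwo.add_self_eq_zero, map_zero, zero_mul, add_zero]

lemma shear_sextic [CharP R 2] (b a : R) {q : MvPolynomial (Fin 3) R} (hq : shear b a q = q) :
    shear b a (X 0 ^ 6 + q ^ 2 * (X 0 + C a * X 2) * X 2) =
      X 0 ^ 6 + q ^ 2 * (X 0 + C a * X 2) * X 2 + C (a * (1 + a ^ 2)) * (X 0 ^ 2 * q ^ 2) := by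
  have h2 : (2 : MvPolynomial (Fin 3) R) = 0 := CharTwo.two_eq_zero
  simp only [map_add, map_mul, map_pow, shear_X_zero, shear_X_two, hq, algHom_C,
    algebraMap_eq, map_one]
  linear_combination (C a ^ 2 * X 0 * X 2 * q ^ 2) * h2

lemma AlgHom.exists_map_pencil {A : Type*} [Semiring A] [Algebra R A] (φ : A →ₐ[R] A)
    {P Q : A} (e : R) (hP : φ P = P) (hQ : φ Q = Q + e • P) (s t : R) :
    ∃ s' t' : R, φ (s • P + t • Q) = s' • P + t' • Q :=
  ⟨s + t * e, t, by rw [map_add, map_smul, map_smul, hP, hQ]; module⟩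

end Shear

/-- Let `b² = a` in characteristic 2. The substitution
`φ : x ↦ x, y ↦ bx + y, z ↦ ax + z` is an involution with `φ(G) = G` for
`G = y² + xz`, `φ(x²G²) = x²G²`, and `φ(H) = H + a(1+a²)x²G²` for
`H = x⁶ + G²(x+az)z`; hence `φ` maps each member of the pencil spanned by
`x²G²` and `H` to a member of the same pencil. -/
theorem stmt_11 (k : Type*) [Field k] [CharP k 2]
    (a b : k) (hab : b ^ 2 = a)
    (φ : MvPolynomial (Fin 3) k →ₐ[k] MvPolynomial (Fin 3) k)
    (hφ : φ = aeval ![X 0, C b * X 0 + X 1, C a * X 0 + X 2])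
    (G H : MvPolynomial (Fin 3) k)
    (hG : G = X 1 ^ 2 + X 0 * X 2)
    (hH : H = X 0 ^ 6 + G ^ 2 * (X 0 + C a * X 2) * X 2) :
    (∀ p, φ (φ p) = p) ∧
    φ G = G ∧
    φ (X 0 ^ 2 * G ^ 2) = X 0 ^ 2 * G ^ 2 ∧
    φ H = H + C (a * (1 + a ^ 2)) * (X 0 ^ 2 * G ^ 2) ∧
    (∀ s t : k, ∃ s' t' : k, φ (C s * (X 0 ^ 2 * G ^ 2) + C t * H) =
      C s' * (X 0 ^ 2 * G ^ 2) + C t' * H) := by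
  obtain rfl : φ = shear b a := hφ
  have hφG : shear b a G = G := hG ▸ shear_conic_of_sq_eq hab
  have hφP : shear b a (X 0 ^ 2 * G ^ 2) = X 0 ^ 2 * G ^ 2 := by simp [hφG]
  have hφH : shear b a H = H + C (a * (1 + a ^ 2)) * (X 0 ^ 2 * G ^ 2) :=
    hH ▸ shear_sextic b a hφG
  refine ⟨shear_shear b a, hφG, hφP, hφH, fun s t => ?_⟩
  simp only [← smul_eq_C_mul] at hφH ⊢
  exact (shear b a).exists_map_pencil _ hφP hφH s t
end

section
/- Let k be a field of characteristic 2 and let a ∈ k. With G = y² + xz and F = x⁶ + G²·(a·x + z)·z in k[x,y,z], a nonzero triple (x,y,z) ∈ k³ satisfies G(x,y,z) = 0 and F(x,y,z) = 0 if and only if x = y = 0. That is, the conic G = 0 meets the sextic F = 0 in ℙ²(k) only at the single point (0:0:1). -/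
theorem conic_and_sextic_eq_zero_iff {R : Type*} [CommRing R] [IsReduced R] (a x y z : R) :
    (y ^ 2 + x * z = 0 ∧ x ^ 6 + (y ^ 2 + x * z) ^ 2 * (a * x + z) * z = 0) ↔
      (x = 0 ∧ y = 0) := by
  constructor
  · rintro ⟨hconic, hsextic⟩
    have hx6 : x ^ 6 = 0 := by simpa [hconic] using hsextic
    have hx : x = 0 := eq_zero_of_pow_eq_zero hx6
    have hy : y ^ 2 = 0 := by simpa [hx] using hconic
    exact ⟨hx, eq_zero_of_pow_eq_zero hy⟩
  · rintro ⟨rfl, rfl⟩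
    constructor <;> ring

theorem stmt_13_general (k : Type*) [Field k] (a : k) :
    ∀ x y z : k, (x, y, z) ≠ (0, 0, 0) →
      ((y ^ 2 + x * z = 0 ∧
        x ^ 6 + (y ^ 2 + x * z) ^ 2 * (a * x + z) * z = 0) ↔ (x = 0 ∧ y = 0)) :=
  fun x y z _ => conic_and_sextic_eq_zero_iff a x y z

/-- In characteristic 2 the conic `G : y² + xz = 0` meets the sextic
`F : x⁶ + (y²+xz)²(ax+z)z = 0` in `ℙ²` only at `(0:0:1)`: for a nonzero triple,
both vanish iff `x = y = 0`. -/
theorem stmt_13 (k : Type*) [Field k] [CharP k 2] (a : k) :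
    ∀ x y z : k, (x, y, z) ≠ (0, 0, 0) →
      ((y ^ 2 + x * z = 0 ∧
        x ^ 6 + (y ^ 2 + x * z) ^ 2 * (a * x + z) * z = 0) ↔ (x = 0 ∧ y = 0)) :=
  stmt_13_general k a
end
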